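/- Let Σ = FG be an exact factorization with projections π, p and actions ▷, ◁ as above. Let k be a field, let σ: G × F × F → kˣ and τ: F × G × G → kˣ (written σ_g(x,y), τ_x(g,h)) satisfy: (a) σ_{g◁x}(y,z)·σ_g(x,yz) = σ_g(xy,z)·σ_g(x,y); (b) σ_g(x,1) = σ_g(1,x) = 1; (c) τ_x(gh,k)·τ_{k▷x}(g,h) = τ_x(h,k)·τ_x(g,hk); (d) τ_x(g,1) = τ_x(1,g) = 1; (e) σ_{ts}(x,y)·τ_{xy}(t,s) = τ_x(t,s)·τ_y(t◁(s▷x), s◁x)·σ_t(s▷x, (s◁x)▷y)·σ_s(x,y); (f) σ_1(s,t) = 1 and τ_1(x,y) = 1. Define ω: Σ × Σ × Σ → kˣ by ω(a,b,c) = τ_{π(c)}(p(a)◁π(b), p(b)) · σ_{p(a)}(π(b), p(b)▷π(c)). Then ω is a normalized 3-cocycle on Σ with values in kˣ: ω(b,c,d)·ω(a,bc,d)·ω(a,b,c) = ω(ab,c,d)·ω(a,b,cd) for all a,b,c,d ∈ Σ, and ω(a,b,c) = 1 whenever one of a,b,c equals 1. -/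
import Mathlib


/-- The Kac 3-cocycle. Given an exact factorization `Σ = FG` with projections
`π, p` and actions `▷ = tr`, `◁ = tl`, and a compatible pair `(σ, τ)` of
normalized cocycles, the map
`ω(a,b,c) = τ_{π(c)}(p(a) ◁ π(b), p(b)) · σ_{p(a)}(π(b), p(b) ▷ π(c))`
is a normalized 3-cocycle on `Σ` with values in `kˣ` (trivial action). -/
theorem stmt_8 {Γ : Type*} [Group Γ] (F G : Subgroup Γ)
    (hfact : Function.Bijective (fun z : F × G => (z.1 : Γ) * (z.2 : Γ)))
    (π : Γ → F) (p : Γ → G) (hπp : ∀ a : Γ, (π a : Γ) * (p a : Γ) = a)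
    (tr : G → F → F) (tl : G → F → G)
    (hact : ∀ (g : G) (x : F), (g : Γ) * (x : Γ) = (tr g x : Γ) * (tl g x : Γ))
    {k : Type*} [Field k] (σ : G → F → F → kˣ) (τ : F → G → G → kˣ)
    -- (a) twisted 2-cocycle condition for σ
    (hσc : ∀ (g : G) (x y z : F),
      σ (tl g x) y z * σ g x (y * z) = σ g (x * y) z * σ g x y)
    -- (b) normalization of σ
    (hσn : ∀ (g : G) (x : F), σ g x 1 = 1 ∧ σ g 1 x = 1)
    -- (c) twisted 2-cocycle condition for τ
    (hτc : ∀ (x : F) (g h l : G),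
      τ x (g * h) l * τ (tr l x) g h = τ x h l * τ x g (h * l))
    -- (d) normalization of τ
    (hτn : ∀ (x : F) (g : G), τ x g 1 = 1 ∧ τ x 1 g = 1)
    -- (e) compatibility between σ and τ
    (hcomp : ∀ (x y : F) (s t : G),
      σ (t * s) x y * τ (x * y) t s =
        τ x t s * τ y (tl t (tr s x)) (tl s x) *
          σ t (tr s x) (tr (tl s x) y) * σ s x y)
    -- (f) further normalization
    (hn2 : (∀ x y : F, σ 1 x y = 1) ∧ ∀ s t : G, τ 1 s t = 1)
    (ω : Γ → Γ → Γ → kˣ)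
    (hω : ∀ a b c : Γ,
      ω a b c = τ (π c) (tl (p a) (π b)) (p b) * σ (p a) (π b) (tr (p b) (π c))) :
    (∀ a b c d : Γ,
      ω b c d * ω a (b * c) d * ω a b c = ω (a * b) c d * ω a b (c * d)) ∧
      ∀ a b : Γ, ω 1 a b = 1 ∧ ω a 1 b = 1 ∧ ω a b 1 = 1 := by
  -- uniqueness of factorization
  have huniq : ∀ (x x' : F) (g g' : G), (x : Γ) * g = (x' : Γ) * g' → x = x' ∧ g = g' := by
    intro x x' g g' hxg
    have := hfact.injective (a₁ := (x, g)) (a₂ := (x', g')) hxg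
    exact ⟨congrArg Prod.fst this, congrArg Prod.snd this⟩
  -- projections of a product x * g
  have hπ : ∀ (x : F) (g : G), π ((x : Γ) * g) = x ∧ p ((x : Γ) * g) = g := by
    intro x g
    exact huniq _ _ _ _ (hπp ((x : Γ) * g))
  have hπ1 : π 1 = 1 ∧ p 1 = 1 := by
    have := hπ 1 1
    simpa using this
  -- unit laws for the actions
  have htrx1 : ∀ g : G, tr g 1 = 1 ∧ tl g 1 = g := by
    intro g
    have h := hact g 1
    have h' : ((1 : F) : Γ) * (g : Γ) = (tr g 1 : Γ) * (tl g 1 : Γ) := by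
      simpa using h
    have h2 := huniq _ _ _ _ h'
    exact ⟨h2.1.symm, h2.2.symm⟩
  have htr1x : ∀ x : F, tr 1 x = x ∧ tl 1 x = 1 := by
    intro x
    have h : (x : Γ) * ((1 : G) : Γ) = (tr 1 x : Γ) * (tl 1 x : Γ) := by
      simpa using hact 1 x
    have h2 := huniq _ _ _ _ h
    exact ⟨h2.1.symm, h2.2.symm⟩
  -- tr/tl of products in G
  have htrmul : ∀ (g h : G) (x : F),
      tr (g * h) x = tr g (tr h x) ∧ tl (g * h) x = tl g (tr h x) * tl h x := by
    intro g h x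
    have e : ((tr (g * h) x : F) : Γ) * (tl (g * h) x : Γ)
        = ((tr g (tr h x) : F) : Γ) * ((tl g (tr h x) * tl h x : G) : Γ) := by
      rw [← hact]
      push_cast
      rw [mul_assoc, hact h x, ← mul_assoc, hact g (tr h x), mul_assoc]
    have h2 := huniq _ _ _ _ e
    exact h2
  -- tr/tl of products in F
  have hFmul : ∀ (g : G) (x y : F),
      tr g (x * y) = tr g x * tr (tl g x) y ∧ tl g (x * y) = tl (tl g x) y := by
    intro g x y
    have e : ((tr g (x * y) : F) : Γ) * (tl g (x * y) : Γ)
        = ((tr g x * tr (tl g x) y : F) : Γ) * ((tl (tl g x) y : G) : Γ) := by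
      rw [← hact]
      push_cast
      rw [← mul_assoc, hact g x, mul_assoc, hact (tl g x) y, mul_assoc]
    exact huniq _ _ _ _ e
  -- projections of products
  have hπmul : ∀ a b : Γ, π (a * b) = π a * tr (p a) (π b)
      ∧ p (a * b) = tl (p a) (π b) * p b := by
    intro a b
    have e : a * b = ((π a * tr (p a) (π b) : F) : Γ) * ((tl (p a) (π b) * p b : G) : Γ) := by
      push_cast
      conv_lhs => rw [← hπp a, ← hπp b]
      rw [mul_assoc, ← mul_assoc (p a : Γ), hact (p a) (π b)]
      group
    rw [e]
    exact hπ _ _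
  constructor
  · intro a b c d
    simp only [hω, (hπmul b c).1, (hπmul b c).2, (hπmul a b).2, (hπmul c d).1]
    rw [(hFmul (p a) (π b) (tr (p b) (π c))).2,
        (htrmul (tl (p b) (π c)) (p c) (π d)).1,
        (htrmul (tl (p a) (π b)) (p b) (π c)).2,
        (hFmul (p b) (π c) (tr (p c) (π d))).1]
    set A := tl (p a) (π b) with hA
    set Z := tr (p b) (π c) with hZ
    set H := tl (p b) (π c) with hH
    set W := tr (p c) (π d) with hW
    have h1 := hcomp (π c) W (p b) A
    have h2 := hσc (p a) (π b) Z (tr H W)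
    have h3 := hτc (π d) (tl A Z) H (p c)
    rw [← hZ, ← hH] at h1
    rw [← hA] at h2
    rw [← hW] at h3
    rw [Units.ext_iff] at h1 h2 h3 ⊢
    push_cast at h1 h2 h3 ⊢
    linear_combination
      (-(((τ (π d) (tl A Z * H) (p c) : kˣ) : k) *
          ((σ (p a) (π b) (Z * tr H W) : kˣ) : k))) * h1
      - (((τ (π d) (tl A Z * H) (p c) : kˣ) : k) * ((τ (π c) A (p b) : kˣ) : k) *
          ((τ W (tl A Z) H : kˣ) : k) * ((σ (p b) (π c) W : kˣ) : k)) * h2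
      - (((τ (π c) A (p b) : kˣ) : k) * ((σ (p b) (π c) W : kˣ) : k) *
          ((σ (p a) (π b * Z) (tr H W) : kˣ) : k) * ((σ (p a) (π b) Z : kˣ) : k)) * h3
  · intro a b
    refine ⟨?_, ?_, ?_⟩
    · rw [hω, hπ1.2, (htr1x (π a)).2, (hτn _ _).2, hn2.1, one_mul]
    · rw [hω, hπ1.1, hπ1.2, (htrx1 (p a)).2, (hτn _ _).1, (hσn _ _).2, one_mul]
    · rw [hω, hπ1.1, (htrx1 (p b)).1, hn2.2, (hσn _ _).1, one_mul]
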